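/- arXiv:1411.4678 — 4 statements merged into one kernel-verified Lean document; each statement's English description precedes it below -/
import Mathlib

section
/- Let H be a real Hilbert space and B : H × H → ℝ a continuous symmetric positive semidefinite bilinear form whose quadratic form q(u) = B(u,u) is sequentially weakly continuous, and suppose the set S = {u ∈ H : q(u) = 1} is nonempty. Then δ := inf{‖u‖² : u ∈ S} is attained at some Û ∈ S, δ > 0, and consequently √(q(u)) ≤ δ^{−1/2} ‖u‖ for every u ∈ H. -/
open Filter Topology
open scoped RealInnerProductSpace

/-!
Take a minimizing sequence for `‖·‖²` on `S = {q = 1}`. It is bounded, so by the sequential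
Banach–Alaoglu theorem (applied, via Riesz, in the separable closed span of the sequence) a
subsequence converges weakly to some `Û`. Weak continuity of `q` keeps `Û` in `S`, and weak lower
semicontinuity of the norm makes it a minimizer; `δ = ‖Û‖² > 0` because `q 0 = 0`. Finally, any
`u` with `q u > 0` rescales to `q(u)^{-1/2} u ∈ S`, whence `δ q(u) ≤ ‖u‖²`.
-/

section

variable {E : Type*} [NormedAddCommGroup E] [InnerProductSpace ℝ E]

theorem norm_sq_le_of_tendsto_inner {u : ℕ → E} {x : E} {L : ℝ}
    (hx : ∀ w, Tendsto (fun n => ⟪u n, w⟫) atTop (𝓝 ⟪x, w⟫))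
    (hL : Tendsto (fun n => ‖u n‖ ^ 2) atTop (𝓝 L)) :
    ‖x‖ ^ 2 ≤ L := by
  -- Cauchy–Schwarz followed by AM–GM
  have hbound : ∀ n, ⟪u n, x⟫ ≤ (‖u n‖ ^ 2 + ‖x‖ ^ 2) / 2 := fun n => by
    nlinarith [real_inner_le_norm (u n) x, sq_nonneg (‖u n‖ - ‖x‖)]
  have hlim : ⟪x, x⟫ ≤ (L + ‖x‖ ^ 2) / 2 :=
    le_of_tendsto_of_tendsto' (hx x) ((hL.add_const _).div_const 2) hbound
  rw [real_inner_self_eq_norm_sq] at hlim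
  linarith

variable [CompleteSpace E]

theorem exists_subseq_tendsto_inner_of_separable [TopologicalSpace.SeparableSpace E]
    {u : ℕ → E} {R : ℝ} (hu : ∀ n, ‖u n‖ ≤ R) :
    ∃ (x : E) (φ : ℕ → ℕ), StrictMono φ ∧
      ∀ w, Tendsto (fun n => ⟪u (φ n), w⟫) atTop (𝓝 ⟪x, w⟫) := by
  set toDual := InnerProductSpace.toDual ℝ E
  have hball : ∀ n, StrongDual.toWeakDual (toDual (u n)) ∈
      WeakDual.toStrongDual ⁻¹' Metric.closedBall (0 : StrongDual ℝ E) R := fun n => by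
    simpa using hu n
  obtain ⟨f, -, φ, hφ, hf⟩ := WeakDual.isSeqCompact_closedBall ℝ E 0 R hball
  refine ⟨toDual.symm (WeakDual.toStrongDual f), φ, hφ, fun w => ?_⟩
  rw [InnerProductSpace.toDual_symm_apply]
  exact ((WeakDual.eval_continuous w).tendsto f).comp hf

theorem exists_subseq_tendsto_inner {u : ℕ → E} {R : ℝ} (hu : ∀ n, ‖u n‖ ≤ R) :
    ∃ (x : E) (φ : ℕ → ℕ), StrictMono φ ∧
      ∀ w, Tendsto (fun n => ⟪u (φ n), w⟫) atTop (𝓝 ⟪x, w⟫) := by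
  set K := (Submodule.span ℝ (Set.range u)).topologicalClosure
  have huK : ∀ n, u n ∈ K := fun n =>
    Submodule.le_topologicalClosure _ (Submodule.subset_span (Set.mem_range_self n))
  have : CompleteSpace K := (Submodule.isClosed_topologicalClosure _).completeSpace_coe
  have : TopologicalSpace.SeparableSpace K :=
    ((Set.countable_range u).isSeparable.span.closure).separableSpace
  obtain ⟨x, φ, hφ, hx⟩ :=
    exists_subseq_tendsto_inner_of_separable (u := fun n => (⟨u n, huK n⟩ : K)) hu
  refine ⟨x, φ, hφ, fun w => ?_⟩
  -- against vectors of `K`, pairing with `w` is pairing with its projection onto `K`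
  simpa using hx (K.orthogonalProjectionOnto w)

theorem exists_norm_sq_eq_sInf {S : Set E} (hS : S.Nonempty)
    (hclosed : ∀ (u : ℕ → E) (x : E), (∀ n, u n ∈ S) →
      (∀ w, Tendsto (fun n => ⟪u n, w⟫) atTop (𝓝 ⟪x, w⟫)) → x ∈ S) :
    ∃ x ∈ S, ‖x‖ ^ 2 = sInf ((fun u : E => ‖u‖ ^ 2) '' S) := by
  set T := (fun u : E => ‖u‖ ^ 2) '' S
  have hTbdd : BddBelow T := ⟨0, by rintro _ ⟨v, -, rfl⟩; positivity⟩
  obtain ⟨t, ht_anti, ht, htT⟩ := exists_seq_tendsto_sInf (hS.image _) hTbdd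
  choose v hvS hvt using htT
  have hv_bdd : ∀ n, ‖v n‖ ≤ √(t 0) := fun n =>
    Real.le_sqrt_of_sq_le ((hvt n).trans_le (ht_anti (Nat.zero_le n)))
  obtain ⟨x, φ, hφ, hx⟩ := exists_subseq_tendsto_inner hv_bdd
  have hxS : x ∈ S := hclosed (v ∘ φ) x (fun n => hvS _) hx
  have hnorm : Tendsto (fun n => ‖v (φ n)‖ ^ 2) atTop (𝓝 (sInf T)) := by
    simpa only [hvt, Function.comp_def] using ht.comp hφ.tendsto_atTop
  exact ⟨x, hxS, (norm_sq_le_of_tendsto_inner hx hnorm).antisymm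
    (csInf_le hTbdd ⟨x, hxS, rfl⟩)⟩

end

theorem sqrt_apply_self_le {E : Type*} [NormedAddCommGroup E] [NormedSpace ℝ E]
    (B : E →L[ℝ] E →L[ℝ] ℝ) {δ : ℝ} (hδ : 0 < δ) (hB : ∀ v, B v v = 1 → δ ≤ ‖v‖ ^ 2) (u : E) :
    √(B u u) ≤ √δ⁻¹ * ‖u‖ := by
  suffices B u u ≤ δ⁻¹ * ‖u‖ ^ 2 by
    simpa [Real.sqrt_mul (inv_nonneg.2 hδ.le), Real.sqrt_sq (norm_nonneg u)] using
      Real.sqrt_le_sqrt this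
  rcases le_or_gt (B u u) 0 with hq | hq
  · exact hq.trans (by positivity)
  set c := (√(B u u))⁻¹
  have hc : c ^ 2 = (B u u)⁻¹ := by rw [inv_pow, Real.sq_sqrt hq.le]
  have hscaled := hB (c • u) (by
    simp only [map_smul, smul_apply, smul_eq_mul]
    rw [← mul_assoc, ← sq, hc, inv_mul_cancel₀ hq.ne'])
  rw [norm_smul, mul_pow, Real.norm_eq_abs, sq_abs, hc] at hscaled
  rw [le_inv_mul_iff₀ hδ]
  rwa [inv_mul_eq_div, le_div_iff₀ hq] at hscaled

theorem stmt5_general {H : Type*} [NormedAddCommGroup H] [InnerProductSpace ℝ H]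
    [CompleteSpace H] (B : H →L[ℝ] H →L[ℝ] ℝ)
    (hweak : ∀ (u : ℕ → H) (x : H),
      (∀ w : H, Tendsto (fun n => ⟪u n, w⟫) atTop (nhds ⟪x, w⟫)) →
      Tendsto (fun n => B (u n) (u n)) atTop (nhds (B x x)))
    (hS : ∃ u : H, B u u = 1) :
    (∃ Uhat : H, B Uhat Uhat = 1 ∧
        ‖Uhat‖ ^ 2 = sInf ((fun u : H => ‖u‖ ^ 2) '' {u : H | B u u = 1})) ∧
    0 < sInf ((fun u : H => ‖u‖ ^ 2) '' {u : H | B u u = 1}) ∧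
    (∀ u : H, Real.sqrt (B u u) ≤
      Real.sqrt (sInf ((fun u : H => ‖u‖ ^ 2) '' {u : H | B u u = 1}))⁻¹ * ‖u‖) := by
  obtain ⟨x, hxS, hx⟩ := exists_norm_sq_eq_sInf (S := {u : H | B u u = 1}) hS
    fun u x hu hux => tendsto_nhds_unique (hweak u x hux) (by
      simp only [show ∀ n, B (u n) (u n) = 1 from hu, tendsto_const_nhds_iff])
  have hx0 : x ≠ 0 := by
    rintro rfl
    simp at hxS
  have hδ : 0 < sInf ((fun u : H => ‖u‖ ^ 2) '' {u : H | B u u = 1}) := by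
    rw [← hx]
    positivity
  refine ⟨⟨x, hxS, hx⟩, hδ, sqrt_apply_self_le B hδ fun v hv => ?_⟩
  exact csInf_le ⟨0, by rintro _ ⟨w, -, rfl⟩; positivity⟩ ⟨v, hv, rfl⟩

/-- Let `H` be a real Hilbert space and `B` a continuous
symmetric positive semidefinite bilinear form whose quadratic form
`q(u) = B(u,u)` is sequentially weakly continuous, and suppose
`S = {u : B(u,u) = 1}` is nonempty. Then `δ = inf {‖u‖² : u ∈ S}` is attained
at some `Uhat ∈ S`, `δ > 0`, and `√(q(u)) ≤ δ^{−1/2} ‖u‖` for every `u`. -/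
theorem stmt5 {H : Type*} [NormedAddCommGroup H] [InnerProductSpace ℝ H]
    [CompleteSpace H] (B : H →L[ℝ] H →L[ℝ] ℝ)
    (hsymm : ∀ u v : H, B u v = B v u)
    (hpos : ∀ u : H, 0 ≤ B u u)
    (hweak : ∀ (u : ℕ → H) (x : H),
      (∀ w : H, Tendsto (fun n => ⟪u n, w⟫) atTop (nhds ⟪x, w⟫)) →
      Tendsto (fun n => B (u n) (u n)) atTop (nhds (B x x)))
    (hS : ∃ u : H, B u u = 1) :
    (∃ Uhat : H, B Uhat Uhat = 1 ∧
        ‖Uhat‖ ^ 2 = sInf ((fun u : H => ‖u‖ ^ 2) '' {u : H | B u u = 1})) ∧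
    0 < sInf ((fun u : H => ‖u‖ ^ 2) '' {u : H | B u u = 1}) ∧
    (∀ u : H, Real.sqrt (B u u) ≤
      Real.sqrt (sInf ((fun u : H => ‖u‖ ^ 2) '' {u : H | B u u = 1}))⁻¹ * ‖u‖) :=
  stmt5_general B hweak hS
end

section
/- Let H be an infinite-dimensional real Hilbert space and B : H × H → ℝ a continuous symmetric bilinear form with B(u,u) > 0 for every u ≠ 0, whose quadratic form q(u) = B(u,u) is sequentially weakly continuous. Then there exist a sequence of real numbers (μ_j)_{j≥1} and a sequence (φ_j)_{j≥1} in H such that: (1) 0 < μ₁ ≤ μ₂ ≤ μ₃ ≤ ⋯ and μ_j → ∞ as j → ∞; (2) ⟨φ_j, v⟩ = μ_j B(φ_j, v) for all v ∈ H and all j; (3) B(φ_i, φ_j) = 1 if i = j and 0 if i ≠ j (B-orthonormality), and ⟨φ_i, φ_j⟩ = 0 for i ≠ j ((A,Σ)-orthogonality); (4) μ₁ = inf{‖u‖² : B(u,u) = 1} and, for each j ≥ 1, μ_{j+1} = inf{‖u‖² : B(u,u) = 1 and B(u, φ_i) = 0 for all i ≤ j}, and these infima are attained at φ₁ and φ_{j+1}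 respectively. -/
/-!
The eigenpairs come from successive constrained minimisation: `φ n` minimises `‖u‖²` over the
`B`-unit sphere of the `B`-orthogonal complement of `φ 0, …, φ (n - 1)`. A minimising sequence is
bounded, so it has a weakly convergent subsequence; weak continuity of `u ↦ B u u` keeps the
constraint `B u u = 1` in the limit, and weak lower semicontinuity of the norm makes the limit a
minimiser. The first variation gives the eigen-equation on the constraint subspace, and
`B`-orthonormality of the `φ i` extends it to all of `H`. If the eigenvalues `‖φ n‖²` stayed
bounded, the `φ n` would form a bounded orthogonal, hence weakly null, sequence, and weak
continuity would force `1 = B (φ n) (φ n) → 0`.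
-/

open Filter Topology
open scoped RealInnerProductSpace

section

variable {H : Type*} [NormedAddCommGroup H] [InnerProductSpace ℝ H]

def TendstoWeakly (u : ℕ → H) (x : H) : Prop :=
  ∀ w : H, Tendsto (fun n => ⟪u n, w⟫) atTop (𝓝 ⟪x, w⟫)

namespace TendstoWeakly

variable {u : ℕ → H} {x : H}

theorem norm_le_of_tendsto (h : TendstoWeakly u x) {r : ℝ}
    (hr : Tendsto (fun n => ‖u n‖) atTop (𝓝 r)) : ‖x‖ ≤ r := by
  have hr0 : 0 ≤ r := ge_of_tendsto' hr fun n => norm_nonneg _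
  have hsq : ‖x‖ ^ 2 ≤ r * ‖x‖ := by
    rw [← real_inner_self_eq_norm_sq]
    exact le_of_tendsto_of_tendsto' (h x) (hr.mul_const ‖x‖)
      fun n => real_inner_le_norm (u n) x
  nlinarith [norm_nonneg x]

theorem mem_of_forall_mem (h : TendstoWeakly u x) (K : Submodule ℝ H)
    [K.HasOrthogonalProjection] (hu : ∀ n, u n ∈ K) : x ∈ K := by
  rw [← K.orthogonal_orthogonal]
  intro y hy
  rw [real_inner_comm]
  have hzero n : ⟪u n, y⟫ = 0 := hy _ (hu n)
  exact tendsto_nhds_unique (h y) (by simpa only [hzero] using tendsto_const_nhds)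

end TendstoWeakly

theorem exists_tendstoWeakly_of_norm_le [CompleteSpace H] {u : ℕ → H} {C : ℝ}
    (hC : ∀ n, ‖u n‖ ≤ C) : ∃ x : H, ∃ g : ℕ → ℕ, StrictMono g ∧ TendstoWeakly (u ∘ g) x := by
  -- sequential Banach–Alaoglu in the separable closed span of the sequence, via Riesz
  set K := (Submodule.span ℝ (Set.range u)).topologicalClosure
  have : CompleteSpace K := (Submodule.isClosed_topologicalClosure _).completeSpace_coe
  have : TopologicalSpace.SeparableSpace K := by
    refine TopologicalSpace.IsSeparable.separableSpace ?_
    rw [Submodule.topologicalClosure_coe]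
    exact (Set.countable_range u).isSeparable.span.closure
  have hmem n : u n ∈ K := Submodule.le_topologicalClosure _ (Submodule.subset_span ⟨n, rfl⟩)
  set v : ℕ → WeakDual ℝ K := fun n => InnerProductSpace.toDual ℝ K ⟨u n, hmem n⟩
  obtain ⟨a, -, g, hg, hlim⟩ := WeakDual.isSeqCompact_closedBall ℝ K (0 : StrongDual ℝ K) C
    (x := v) fun n => by
      rw [Set.mem_preimage, mem_closedBall_zero_iff]
      exact ((InnerProductSpace.toDual ℝ K).norm_map _).trans_le (hC n)
  refine ⟨(InnerProductSpace.toDual ℝ K).symm (WeakDual.toStrongDual a), g, hg, fun w => ?_⟩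
  have hP (y : K) :
      ⟪(y : H), w⟫ = InnerProductSpace.toDual ℝ K y (K.orthogonalProjectionOnto w) := by
    rw [InnerProductSpace.toDual_apply_apply,
      Submodule.inner_orthogonalProjectionOnto_eq_of_mem_left]
  rw [hP, LinearIsometryEquiv.apply_symm_apply]
  exact (((WeakDual.eval_continuous _).tendsto a).comp hlim).congr fun n => (hP _).symm

theorem tendstoWeakly_zero_of_pairwise_inner_eq_zero {u : ℕ → H} {C : ℝ} (hu : ∀ n, u n ≠ 0)
    (horth : Pairwise fun i j => ⟪u i, u j⟫ = 0) (hC : ∀ n, ‖u n‖ ≤ C) :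
    TendstoWeakly u 0 := by
  set e : ℕ → H := fun n => ‖u n‖⁻¹ • u n
  have he : Orthonormal ℝ e := by
    refine ⟨fun n => ?_, fun i j hij => ?_⟩
    · simp [e, norm_smul, hu n]
    · simp [e, real_inner_smul_left, real_inner_smul_right, horth hij]
  intro w
  have hew : Tendsto (fun n => ⟪e n, w⟫) atTop (𝓝 0) := by
    have := ((he.inner_products_summable w).tendsto_atTop_zero).sqrt
    rw [tendsto_zero_iff_abs_tendsto_zero]
    simpa [Function.comp_def, Real.sqrt_sq_eq_abs] using this
  have hue n : ⟪u n, w⟫ = ⟪e n, w⟫ * ‖u n‖ := by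
    simp only [e, real_inner_smul_left]
    field_simp [norm_ne_zero_iff.2 (hu n)]
  rw [inner_zero_left]
  simp only [hue]
  exact hew.zero_mul_isBoundedUnder_le
    ⟨C, eventually_map.2 (Eventually.of_forall fun n => by simpa using hC n)⟩

theorem IsMinOn.isLeast_image {α β : Type*} [Preorder β] {f : α → β} {s : Set α} {a : α}
    (h : IsMinOn f s a) (ha : a ∈ s) : IsLeast (f '' s) (f a) :=
  ⟨⟨a, ha, rfl⟩, by rintro _ ⟨b, hb, rfl⟩; exact h hb⟩

section BilinearForm

variable (B : H →L[ℝ] H →L[ℝ] ℝ)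

noncomputable def bOrthogonal {ι : Type*} (c : ι → H) : Submodule ℝ H :=
  (ContinuousLinearMap.pi fun i => B.flip (c i)).ker

variable {B}

theorem mem_bOrthogonal {ι : Type*} {c : ι → H} {v : H} :
    v ∈ bOrthogonal B c ↔ ∀ i, B v (c i) = 0 := by
  simp [bOrthogonal, funext_iff]

theorem isClosed_bOrthogonal {ι : Type*} (c : ι → H) : IsClosed (bOrthogonal B c : Set H) :=
  ContinuousLinearMap.isClosed_ker _

theorem exists_ne_zero_mem_bOrthogonal {ι : Type*} [Finite ι] (hinf : ¬ FiniteDimensional ℝ H)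
    (c : ι → H) : ∃ v ∈ bOrthogonal B c, v ≠ 0 := by
  refine Submodule.exists_mem_ne_zero_of_ne_bot fun hbot => hinf ?_
  exact FiniteDimensional.of_injective _ (LinearMap.ker_eq_bot.1 hbot)

theorem map_eq_zero_of_bOrthonormal {ι M : Type*} [Fintype ι] [DecidableEq ι] [AddCommGroup M]
    [Module ℝ M] {c : ι → H} (hc : ∀ i j, B (c i) (c j) = if i = j then 1 else 0)
    {f : H →ₗ[ℝ] M} (hfV : ∀ v ∈ bOrthogonal B c, f v = 0) (hfc : ∀ i, f (c i) = 0) (v : H) :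
    f v = 0 := by
  set v₀ := v - ∑ i, B v (c i) • c i
  have hv₀ : v₀ ∈ bOrthogonal B c := by
    refine mem_bOrthogonal.2 fun j => ?_
    simp [v₀, hc]
  have hv : v = v₀ + ∑ i, B v (c i) • c i := (sub_add_cancel _ _).symm
  rw [hv, map_add, map_sum, hfV v₀ hv₀]
  simp [hfc]

theorem apply_smul_self_eq_one (hpos : ∀ u : H, u ≠ 0 → 0 < B u u) {v : H} (hv : v ≠ 0) :
    B ((√(B v v))⁻¹ • v) ((√(B v v))⁻¹ • v) = 1 := by
  have := hpos v hv
  simp only [map_smul, smul_apply, smul_eq_mul, ← mul_assoc, ← mul_inv,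
    Real.mul_self_sqrt this.le]
  exact inv_mul_cancel₀ this.ne'

theorem mul_apply_self_le_norm_sq (hpos : ∀ u : H, u ≠ 0 → 0 < B u u) {V : Submodule ℝ H}
    {m : ℝ} (hm : ∀ u ∈ V, B u u = 1 → m ≤ ‖u‖ ^ 2) {v : H} (hv : v ∈ V) :
    m * B v v ≤ ‖v‖ ^ 2 := by
  rcases eq_or_ne v 0 with rfl | hv0
  · simp
  have hBv := hpos v hv0
  have h := hm _ (V.smul_mem _ hv) (apply_smul_self_eq_one hpos hv0)
  rw [norm_smul, mul_pow, Real.norm_eq_abs, sq_abs, inv_pow, Real.sq_sqrt hBv.le,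
    ← div_eq_inv_mul, le_div_iff₀ hBv] at h
  exact h

theorem inner_eq_mul_apply_of_mul_apply_self_le (hsymm : ∀ u v : H, B u v = B v u)
    {V : Submodule ℝ H} {m : ℝ} (hm : ∀ v ∈ V, m * B v v ≤ ‖v‖ ^ 2) {φ : H} (hφV : φ ∈ V)
    (hφ : ‖φ‖ ^ 2 = m * B φ φ) {v : H} (hv : v ∈ V) : ⟪φ, v⟫ = m * B φ v := by
  have hquad (t : ℝ) :
      0 ≤ (‖v‖ ^ 2 - m * B v v) * (t * t) + 2 * (⟪φ, v⟫ - m * B φ v) * t + 0 := by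
    have h := hm _ (V.add_mem hφV (V.smul_mem t hv))
    rw [norm_add_sq_real, norm_smul, real_inner_smul_right, mul_pow, Real.norm_eq_abs,
      sq_abs] at h
    simp only [map_add, map_smul, add_apply, smul_apply, smul_eq_mul, hsymm v φ] at h
    nlinarith
  have := discrim_le_zero hquad
  rw [discrim] at this
  nlinarith [sq_nonneg (⟪φ, v⟫ - m * B φ v)]

end BilinearForm

section Minimization

variable [CompleteSpace H] {B : H →L[ℝ] H →L[ℝ] ℝ}

theorem exists_isMinOn_norm_sq (hpos : ∀ u : H, u ≠ 0 → 0 < B u u)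
    (hweak : ∀ (u : ℕ → H) (x : H), TendstoWeakly u x →
      Tendsto (fun n => B (u n) (u n)) atTop (𝓝 (B x x)))
    {V : Submodule ℝ H} (hV : IsClosed (V : Set H)) (hne : ∃ v ∈ V, v ≠ 0) :
    ∃ φ ∈ {u | B u u = 1 ∧ u ∈ V}, IsMinOn (fun u => ‖u‖ ^ 2) {u | B u u = 1 ∧ u ∈ V} φ := by
  set S := {u | B u u = 1 ∧ u ∈ V}
  have : CompleteSpace V := hV.completeSpace_coe
  obtain ⟨v, hvV, hv0⟩ := hne
  have hSne : ((fun u : H => ‖u‖ ^ 2) '' S).Nonempty :=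
    ⟨_, _, ⟨apply_smul_self_eq_one hpos hv0, V.smul_mem _ hvV⟩, rfl⟩
  have hbdd : BddBelow ((fun u : H => ‖u‖ ^ 2) '' S) := ⟨0, by rintro _ ⟨u, -, rfl⟩; positivity⟩
  obtain ⟨a, ha_anti, ha_lim, haS⟩ := exists_seq_tendsto_sInf hSne hbdd
  choose w hwS hwa using haS
  have hw_bound n : ‖w n‖ ≤ √(a 0) :=
    Real.le_sqrt_of_sq_le ((hwa n).trans_le (ha_anti (Nat.zero_le n)))
  obtain ⟨x, g, hg, hx⟩ := exists_tendstoWeakly_of_norm_le hw_bound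
  have hxS : x ∈ S := by
    refine ⟨tendsto_nhds_unique (hweak _ x hx) ?_, hx.mem_of_forall_mem V fun n => (hwS _).2⟩
    simpa only [Function.comp_apply, (hwS _).1] using tendsto_const_nhds
  have hx_le : ‖x‖ ^ 2 ≤ sInf ((fun u : H => ‖u‖ ^ 2) '' S) := by
    have hnorm :
        Tendsto (fun n => ‖(w ∘ g) n‖) atTop (𝓝 √(sInf ((fun u : H => ‖u‖ ^ 2) '' S))) := by
      have := (ha_lim.comp hg.tendsto_atTop).sqrt
      simpa only [Function.comp_apply, ← hwa, Real.sqrt_sq (norm_nonneg _)] using this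
    have := hx.norm_le_of_tendsto hnorm
    rwa [Real.le_sqrt (norm_nonneg _) (Real.sInf_nonneg (by rintro _ ⟨u, -, rfl⟩; positivity))]
      at this
  exact ⟨x, hxS, fun u hu => hx_le.trans (csInf_le hbdd ⟨u, hu, rfl⟩)⟩

end Minimization

section SuccessiveMinimizers

variable {B : H →L[ℝ] H →L[ℝ] ℝ} {φ : ℕ → H}

variable (B) in
def IsSuccessiveMinimizers (φ : ℕ → H) : Prop :=
  ∀ n, φ n ∈ {u | B u u = 1 ∧ u ∈ bOrthogonal B fun i : Fin n => φ i} ∧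
    IsMinOn (fun u => ‖u‖ ^ 2) {u | B u u = 1 ∧ u ∈ bOrthogonal B fun i : Fin n => φ i} (φ n)

theorem exists_isSuccessiveMinimizers [CompleteSpace H] (hinf : ¬ FiniteDimensional ℝ H)
    (hpos : ∀ u : H, u ≠ 0 → 0 < B u u)
    (hweak : ∀ (u : ℕ → H) (x : H), TendstoWeakly u x →
      Tendsto (fun n => B (u n) (u n)) atTop (𝓝 (B x x))) :
    ∃ φ, IsSuccessiveMinimizers B φ := by
  have step (n : ℕ) (c : Fin n → H) := exists_isMinOn_norm_sq hpos hweak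
    (isClosed_bOrthogonal (B := B) c) (exists_ne_zero_mem_bOrthogonal hinf c)
  choose next hnext_mem hnext_min using step
  let φ : ℕ → H := Nat.strongRec fun n prev => next n fun i => prev i i.isLt
  have hφ (n : ℕ) : φ n = next n fun i : Fin n => φ i := Nat.strongRec_eq _ n
  refine ⟨φ, fun n => ?_⟩
  rw [hφ n]
  exact ⟨hnext_mem n _, hnext_min n _⟩

namespace IsSuccessiveMinimizers

theorem apply_self (hφ : IsSuccessiveMinimizers B φ) (n : ℕ) : B (φ n) (φ n) = 1 :=
  (hφ n).1.1

theorem apply_of_lt (hφ : IsSuccessiveMinimizers B φ) {i n : ℕ} (hi : i < n) :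
    B (φ n) (φ i) = 0 :=
  mem_bOrthogonal.1 (hφ n).1.2 ⟨i, hi⟩

theorem apply_eq_ite (hsymm : ∀ u v : H, B u v = B v u) (hφ : IsSuccessiveMinimizers B φ)
    (i j : ℕ) : B (φ i) (φ j) = if i = j then 1 else 0 := by
  rcases lt_trichotomy i j with h | rfl | h
  · rw [if_neg h.ne, hsymm, hφ.apply_of_lt h]
  · rw [if_pos rfl, hφ.apply_self]
  · rw [if_neg h.ne', hφ.apply_of_lt h]

theorem ne_zero (hφ : IsSuccessiveMinimizers B φ) (n : ℕ) : φ n ≠ 0 := by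
  intro h
  simpa [h] using hφ.apply_self n

theorem inner_eq_mul_apply (hsymm : ∀ u v : H, B u v = B v u)
    (hpos : ∀ u : H, u ≠ 0 → 0 < B u u) (hφ : IsSuccessiveMinimizers B φ) (n : ℕ) (v : H) :
    ⟪φ n, v⟫ = ‖φ n‖ ^ 2 * B (φ n) v := by
  induction n using Nat.strong_induction_on generalizing v with
  | _ n ih =>
    set V := bOrthogonal B fun i : Fin n => φ i
    let f : H →ₗ[ℝ] ℝ := (innerSL ℝ (φ n) - ‖φ n‖ ^ 2 • B (φ n) : H →L[ℝ] ℝ)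
    have hf (v : H) : f v = ⟪φ n, v⟫ - ‖φ n‖ ^ 2 * B (φ n) v := rfl
    have hmin : ∀ v ∈ V, ‖φ n‖ ^ 2 * B v v ≤ ‖v‖ ^ 2 :=
      fun v => mul_apply_self_le_norm_sq hpos fun u hu hBu => (hφ n).2 ⟨hBu, hu⟩
    have hfV : ∀ v ∈ V, f v = 0 := fun v hv => by
      rw [hf, sub_eq_zero]
      exact inner_eq_mul_apply_of_mul_apply_self_le hsymm hmin (hφ n).1.2
        (by rw [hφ.apply_self, mul_one]) hv
    have hfc (i : Fin n) : f (φ i) = 0 := by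
      rw [hf, real_inner_comm, ih i i.isLt, hφ.apply_of_lt i.isLt, hsymm, hφ.apply_of_lt i.isLt]
      ring
    rw [← sub_eq_zero, ← hf]
    exact map_eq_zero_of_bOrthonormal (c := fun i : Fin n => φ i)
      (fun i j => (hφ.apply_eq_ite hsymm i j).trans (by simp [Fin.ext_iff])) hfV hfc v

theorem inner_eq_zero (hsymm : ∀ u v : H, B u v = B v u) (hpos : ∀ u : H, u ≠ 0 → 0 < B u u)
    (hφ : IsSuccessiveMinimizers B φ) {i j : ℕ} (hij : i ≠ j) : ⟪φ i, φ j⟫ = 0 := by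
  rw [hφ.inner_eq_mul_apply hsymm hpos, hφ.apply_eq_ite hsymm, if_neg hij, mul_zero]

theorem norm_sq_eq_sInf (hφ : IsSuccessiveMinimizers B φ) (n : ℕ) :
    ‖φ n‖ ^ 2 = sInf ((fun u => ‖u‖ ^ 2) '' {u | B u u = 1 ∧ ∀ i < n, B u (φ i) = 0}) := by
  have hS : {u | B u u = 1 ∧ ∀ i < n, B u (φ i) = 0} =
      {u | B u u = 1 ∧ u ∈ bOrthogonal B fun i : Fin n => φ i} := by
    simp [mem_bOrthogonal, Fin.forall_iff]
  rw [hS, ((hφ n).2.isLeast_image (hφ n).1).csInf_eq]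

theorem monotone_norm_sq (hφ : IsSuccessiveMinimizers B φ) : Monotone fun n => ‖φ n‖ ^ 2 :=
  monotone_nat_of_le_succ fun n => (hφ n).2
    ⟨hφ.apply_self _, mem_bOrthogonal.2 fun i => hφ.apply_of_lt (i.isLt.trans n.lt_succ_self)⟩

theorem tendsto_norm_sq_atTop (hsymm : ∀ u v : H, B u v = B v u)
    (hpos : ∀ u : H, u ≠ 0 → 0 < B u u)
    (hweak : ∀ (u : ℕ → H) (x : H), TendstoWeakly u x →
      Tendsto (fun n => B (u n) (u n)) atTop (𝓝 (B x x)))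
    (hφ : IsSuccessiveMinimizers B φ) : Tendsto (fun n => ‖φ n‖ ^ 2) atTop atTop := by
  refine tendsto_atTop_atTop_of_monotone' hφ.monotone_norm_sq fun ⟨C, hC⟩ => ?_
  have hbound n : ‖φ n‖ ≤ √C := Real.le_sqrt_of_sq_le (hC ⟨n, rfl⟩)
  have hlim := hweak φ 0 (tendstoWeakly_zero_of_pairwise_inner_eq_zero hφ.ne_zero
    (fun _ _ => hφ.inner_eq_zero hsymm hpos) hbound)
  simp only [hφ.apply_self, map_zero] at hlim
  exact one_ne_zero (tendsto_nhds_unique tendsto_const_nhds hlim)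

end IsSuccessiveMinimizers

end SuccessiveMinimizers

end

/-- Let `H` be an infinite-dimensional real Hilbert space
and `B` a continuous symmetric bilinear form with `B(u,u) > 0` for `u ≠ 0`,
whose quadratic form is sequentially weakly continuous. Then there exist
sequences `(μ_j)` of reals and `(φ_j)` in `H` (indexed by `ℕ`, so `μ 0 = μ₁`)
such that: (1) `0 < μ₁ ≤ μ₂ ≤ ⋯` and `μ_j → ∞`; (2) `⟪φ_j, v⟫ = μ_j B(φ_j, v)`
for all `v`; (3) `B(φ_i,φ_j) = δ_{ij}` and `⟪φ_i, φ_j⟫ = 0` for `i ≠ j`;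
(4) `μ₁ = inf {‖u‖² : B(u,u) = 1}` attained at `φ₁`, and
`μ_{j+1} = inf {‖u‖² : B(u,u) = 1, B(u,φ_i) = 0 ∀ i ≤ j}` attained at
`φ_{j+1}`. -/
theorem stmt11 {H : Type*} [NormedAddCommGroup H] [InnerProductSpace ℝ H]
    [CompleteSpace H] (hinf : ¬ FiniteDimensional ℝ H)
    (B : H →L[ℝ] H →L[ℝ] ℝ)
    (hsymm : ∀ u v : H, B u v = B v u)
    (hpos : ∀ u : H, u ≠ 0 → 0 < B u u)
    (hweak : ∀ (u : ℕ → H) (x : H),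
      (∀ w : H, Tendsto (fun n => ⟪u n, w⟫) atTop (nhds ⟪x, w⟫)) →
      Tendsto (fun n => B (u n) (u n)) atTop (nhds (B x x))) :
    ∃ (μ : ℕ → ℝ) (φ : ℕ → H),
      (0 < μ 0 ∧ Monotone μ ∧ Tendsto μ atTop atTop) ∧
      (∀ j : ℕ, ∀ v : H, ⟪φ j, v⟫ = μ j * B (φ j) v) ∧
      (∀ i j : ℕ, B (φ i) (φ j) = if i = j then 1 else 0) ∧
      (∀ i j : ℕ, i ≠ j → ⟪φ i, φ j⟫ = 0) ∧
      (μ 0 = sInf ((fun u : H => ‖u‖ ^ 2) '' {u : H | B u u = 1}) ∧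
        B (φ 0) (φ 0) = 1 ∧ ‖φ 0‖ ^ 2 = μ 0) ∧
      (∀ j : ℕ,
        μ (j + 1) = sInf ((fun u : H => ‖u‖ ^ 2) ''
          {u : H | B u u = 1 ∧ ∀ i ≤ j, B u (φ i) = 0}) ∧
        B (φ (j + 1)) (φ (j + 1)) = 1 ∧ (∀ i ≤ j, B (φ (j + 1)) (φ i) = 0) ∧
        ‖φ (j + 1)‖ ^ 2 = μ (j + 1)) := by
  obtain ⟨φ, hφ⟩ := exists_isSuccessiveMinimizers hinf hpos hweak
  refine ⟨fun n => ‖φ n‖ ^ 2, φ,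
    ⟨pow_pos (norm_pos_iff.2 (hφ.ne_zero 0)) 2, hφ.monotone_norm_sq,
      hφ.tendsto_norm_sq_atTop hsymm hpos hweak⟩,
    hφ.inner_eq_mul_apply hsymm hpos, hφ.apply_eq_ite hsymm,
    fun _ _ => hφ.inner_eq_zero hsymm hpos,
    ⟨by simpa using hφ.norm_sq_eq_sInf 0, hφ.apply_self 0, rfl⟩,
    fun j => ⟨by simpa [Nat.lt_succ_iff] using hφ.norm_sq_eq_sInf (j + 1), hφ.apply_self _,
      fun _ hi => hφ.apply_of_lt (Nat.lt_succ_of_le hi), rfl⟩⟩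
end

section
/- Let H be a real Hilbert space and B : H × H → ℝ a continuous symmetric bilinear form with B(u,u) > 0 for every u ≠ 0, whose quadratic form q(u) = B(u,u) is sequentially weakly continuous. Then for every μ ∈ ℝ the eigenspace E(μ) = {u ∈ H : ⟨u, v⟩ = μ B(u, v) for all v ∈ H} is a finite-dimensional linear subspace of H. -/
open Filter Topology
open scoped RealInnerProductSpace

/-!
Every `u ∈ E(μ)` satisfies `‖u‖² = ⟪u, u⟫ = μ B(u, u)`. If `E(μ)` were infinite-dimensional it
would contain an orthonormal sequence `eₙ` (Gram–Schmidt); by Bessel's inequality `eₙ ⇀ 0`, so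
weak continuity gives `μ B(eₙ, eₙ) → μ B(0, 0) = 0`, while `μ B(eₙ, eₙ) = ‖eₙ‖² = 1` for all `n`.
-/

section Orthonormal

variable {𝕜 E : Type*} [RCLike 𝕜] [NormedAddCommGroup E] [InnerProductSpace 𝕜 E]

theorem exists_orthonormal_nat_of_not_finiteDimensional (h : ¬FiniteDimensional 𝕜 E) :
    ∃ e : ℕ → E, Orthonormal 𝕜 e := by
  let b := Module.Basis.ofVectorSpace 𝕜 E
  have : Infinite (Module.Basis.ofVectorSpaceIndex 𝕜 E) := by
    rw [← not_finite_iff_infinite]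
    intro
    exact h (Module.Finite.of_basis b)
  let ι := Infinite.natEmbedding (Module.Basis.ofVectorSpaceIndex 𝕜 E)
  exact ⟨InnerProductSpace.gramSchmidtNormed 𝕜 (b ∘ ι),
    InnerProductSpace.gramSchmidtNormed_orthonormal (b.linearIndependent.comp ι ι.injective)⟩

theorem Orthonormal.tendsto_inner_left_zero {e : ℕ → E} (he : Orthonormal 𝕜 e) (v : E) :
    Tendsto (fun n => inner 𝕜 (e n) v) atTop (𝓝 0) := by
  rw [tendsto_zero_iff_norm_tendsto_zero]
  simpa using (he.inner_products_summable (x := v)).tendsto_atTop_zero.sqrt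

end Orthonormal

section Eigenspace

variable {H : Type*} [NormedAddCommGroup H] [InnerProductSpace ℝ H]

theorem Submodule.finiteDimensional_of_norm_sq_eq_mul {K : Submodule ℝ H} {q : H → ℝ} {μ : ℝ}
    (hK : ∀ u ∈ K, ‖u‖ ^ 2 = μ * q u)
    (hq : ∀ u : ℕ → H, (∀ w, Tendsto (fun n => ⟪u n, w⟫) atTop (𝓝 0)) →
      Tendsto (fun n => q (u n)) atTop (𝓝 (q 0))) :
    FiniteDimensional ℝ K := by
  by_contra hK_inf
  obtain ⟨e, he⟩ := exists_orthonormal_nat_of_not_finiteDimensional hK_inf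
  have he' : Orthonormal ℝ (fun n => (e n : H)) := he.comp_linearIsometry K.subtypeₗᵢ
  have hlim : Tendsto (fun n => μ * q (e n)) atTop (𝓝 (μ * q 0)) :=
    (hq _ he'.tendsto_inner_left_zero).const_mul μ
  have hone : ∀ n, μ * q (e n) = 1 := fun n => by
    rw [← hK _ (e n).2, he'.1 n, one_pow]
  have hzero : μ * q 0 = 0 := by
    rw [← hK 0 K.zero_mem, norm_zero, zero_pow two_ne_zero]
  simp only [hone, hzero] at hlim
  exact one_ne_zero (tendsto_nhds_unique tendsto_const_nhds hlim)

theorem mem_ker_innerₗ_sub_smul_iff (B : H →L[ℝ] H →L[ℝ] ℝ) (μ : ℝ) (u : H) :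
    u ∈ LinearMap.ker (innerₗ H - μ • B.toLinearMap₁₂) ↔ ∀ v : H, ⟪u, v⟫ = μ * B u v := by
  simp [sub_eq_zero, LinearMap.ext_iff]

end Eigenspace

theorem stmt13_general {H : Type*} [NormedAddCommGroup H] [InnerProductSpace ℝ H]
    (B : H →L[ℝ] H →L[ℝ] ℝ)
    (hweak : ∀ (u : ℕ → H) (x : H),
      (∀ w : H, Tendsto (fun n => ⟪u n, w⟫) atTop (nhds ⟪x, w⟫)) →
      Tendsto (fun n => B (u n) (u n)) atTop (nhds (B x x))) :
    ∀ μ : ℝ, ∃ E : Submodule ℝ H,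
      (E : Set H) = {u : H | ∀ v : H, ⟪u, v⟫ = μ * B u v} ∧
      FiniteDimensional ℝ E := by
  intro μ
  refine ⟨LinearMap.ker (innerₗ H - μ • B.toLinearMap₁₂),
    Set.ext fun u => mem_ker_innerₗ_sub_smul_iff B μ u, ?_⟩
  refine Submodule.finiteDimensional_of_norm_sq_eq_mul (q := fun u => B u u) (μ := μ)
    (fun u hu => ?_) (fun u hu => hweak u 0 (by simpa only [inner_zero_left] using hu))
  rw [← real_inner_self_eq_norm_sq]
  exact (mem_ker_innerₗ_sub_smul_iff B μ u).1 hu u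

/-- Let `H` be a real Hilbert space and `B` a continuous
symmetric bilinear form with `B(u,u) > 0` for `u ≠ 0`, whose quadratic form
is sequentially weakly continuous. Then for every `μ ∈ ℝ` the eigenspace
`E(μ) = {u : ⟪u, v⟫ = μ B(u, v) ∀ v}` is a finite-dimensional linear
subspace of `H`. -/
theorem stmt13 {H : Type*} [NormedAddCommGroup H] [InnerProductSpace ℝ H]
    [CompleteSpace H] (B : H →L[ℝ] H →L[ℝ] ℝ)
    (hsymm : ∀ u v : H, B u v = B v u)
    (hpos : ∀ u : H, u ≠ 0 → 0 < B u u)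
    (hweak : ∀ (u : ℕ → H) (x : H),
      (∀ w : H, Tendsto (fun n => ⟪u n, w⟫) atTop (nhds ⟪x, w⟫)) →
      Tendsto (fun n => B (u n) (u n)) atTop (nhds (B x x))) :
    ∀ μ : ℝ, ∃ E : Submodule ℝ H,
      (E : Set H) = {u : H | ∀ v : H, ⟪u, v⟫ = μ * B u v} ∧
      FiniteDimensional ℝ E :=
  stmt13_general B hweak
end

section
/- Let H be a nonzero real Hilbert space and B : H × H → ℝ a continuous symmetric bilinear form with B(u,u) > 0 for every u ≠ 0, whose quadratic form is sequentially weakly continuous, and let μ₁ := inf{‖u‖² : B(u,u) = 1}. Then: (a) μ₁ B(u,u) ≤ ‖u‖² for every u ∈ H; and (b) if u ≠ 0 and μ₁ B(u,u) = ‖u‖², then u is an eigenfunction corresponding to μ₁, i.e. ⟨u, v⟩ = μ₁ B(u, v) for all v ∈ H. -/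
/-!
Rescaling `u` to `B(u,u) = 1` turns the definition of `μ₁` into (a); when `B(u,u) ≤ 0`, (a)
holds because `μ₁ ≥ 0`. By (a), the symmetric bilinear form `⟪u, v⟫ - μ₁ B(u, v)` is positive
semidefinite, and (b) says that it vanishes on `u × H` as soon as it vanishes at `(u, u)`:
along the line `u + t v` its values form a nonnegative quadratic in `t` with no constant term,
so the linear coefficient is zero.
-/

open Filter Topology
open scoped RealInnerProductSpace

namespace LinearMap.BilinForm.IsPosSemidef

variable {K E : Type*} [Field K] [LinearOrder K] [IsStrictOrderedRing K]
  [AddCommGroup E] [Module K E]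

theorem apply_eq_zero_of_apply_self_eq_zero {A : LinearMap.BilinForm K E} (hA : A.IsPosSemidef)
    {u : E} (hu : A u u = 0) (v : E) : A u v = 0 := by
  have hquad : ∀ t : K, 0 ≤ A v v * (t * t) + 2 * A u v * t + 0 := fun t => by
    have h := hA.isNonneg.nonneg (u + t • v)
    have hvu : A v u = A u v := hA.isSymm.eq v u
    simp only [map_add, map_smul, LinearMap.add_apply, LinearMap.smul_apply, smul_eq_mul,
      hu, hvu] at h
    linear_combination h
  have hdisc := discrim_le_zero hquad
  rw [discrim] at hdisc
  exact pow_eq_zero_iff two_ne_zero |>.mp <| le_antisymm (by nlinarith) (sq_nonneg _)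

end LinearMap.BilinForm.IsPosSemidef

section Rayleigh

variable {E : Type*}

theorem mul_apply_self_le_norm_sq_s15 [NormedAddCommGroup E] [NormedSpace ℝ E]
    (B : E →ₗ[ℝ] E →ₗ[ℝ] ℝ) {μ : ℝ} (hμ : 0 ≤ μ) (hle : ∀ w, B w w = 1 → μ ≤ ‖w‖ ^ 2)
    (u : E) : μ * B u u ≤ ‖u‖ ^ 2 := by
  rcases le_or_gt (B u u) 0 with hB | hB
  · nlinarith [mul_nonpos_of_nonneg_of_nonpos hμ hB, sq_nonneg ‖u‖]
  set s := √(B u u)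
  have hs : 0 < s := Real.sqrt_pos.mpr hB
  have hs2 : s ^ 2 = B u u := Real.sq_sqrt hB.le
  have hw := hle (s⁻¹ • u) (by
    simp only [map_smul, LinearMap.smul_apply, smul_eq_mul, ← hs2]
    field_simp)
  rw [norm_smul, mul_pow, Real.norm_eq_abs, abs_inv, abs_of_pos hs, inv_pow, hs2] at hw
  calc μ * B u u ≤ (B u u)⁻¹ * ‖u‖ ^ 2 * B u u := by gcongr
    _ = ‖u‖ ^ 2 := by field_simp

theorem inner_eq_mul_apply_of_mul_apply_self_eq_norm_sq [NormedAddCommGroup E]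
    [InnerProductSpace ℝ E] {B : E →ₗ[ℝ] E →ₗ[ℝ] ℝ} (hsymm : ∀ u v, B u v = B v u) {μ : ℝ}
    (hle : ∀ v, μ * B v v ≤ ‖v‖ ^ 2) {u : E} (heq : μ * B u u = ‖u‖ ^ 2) (v : E) :
    ⟪u, v⟫ = μ * B u v := by
  have hA : LinearMap.BilinForm.IsPosSemidef (innerₗ E - μ • B) :=
    ⟨⟨fun x y => by simp [real_inner_comm, hsymm x y]⟩,
      ⟨fun x => by simpa [real_inner_self_eq_norm_sq] using hle x⟩⟩
  have h := hA.apply_eq_zero_of_apply_self_eq_zero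
    (show (innerₗ E - μ • B) u u = 0 by simp [heq]) v
  simpa [sub_eq_zero] using h

end Rayleigh

theorem stmt15_general {H : Type*} [NormedAddCommGroup H] [InnerProductSpace ℝ H]
    (B : H →L[ℝ] H →L[ℝ] ℝ)
    (hsymm : ∀ u v : H, B u v = B v u)
    (μ₁ : ℝ) (hμ₁ : μ₁ = sInf ((fun u : H => ‖u‖ ^ 2) '' {u : H | B u u = 1})) :
    (∀ u : H, μ₁ * B u u ≤ ‖u‖ ^ 2) ∧
    (∀ u : H, u ≠ 0 → μ₁ * B u u = ‖u‖ ^ 2 →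
      ∀ v : H, ⟪u, v⟫ = μ₁ * B u v) := by
  have hnonneg : ∀ x ∈ (fun u : H => ‖u‖ ^ 2) '' {u : H | B u u = 1}, 0 ≤ x := by
    rintro _ ⟨w, -, rfl⟩
    positivity
  have hle : ∀ w : H, B w w = 1 → μ₁ ≤ ‖w‖ ^ 2 := fun w hw =>
    hμ₁ ▸ csInf_le ⟨0, hnonneg⟩ ⟨w, hw, rfl⟩
  have ha : ∀ u : H, μ₁ * B u u ≤ ‖u‖ ^ 2 :=
    mul_apply_self_le_norm_sq_s15 B.toLinearMap₁₂ (hμ₁ ▸ Real.sInf_nonneg hnonneg) hle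
  exact ⟨ha, fun u _ heq =>
    inner_eq_mul_apply_of_mul_apply_self_eq_norm_sq (B := B.toLinearMap₁₂) hsymm ha heq⟩

/-- Let `H` be a nonzero real Hilbert space and `B` a
continuous symmetric bilinear form with `B(u,u) > 0` for `u ≠ 0`, whose
quadratic form is sequentially weakly continuous, and let
`μ₁ = inf {‖u‖² : B(u,u) = 1}`. Then (a) `μ₁ B(u,u) ≤ ‖u‖²` for every `u`,
and (b) if `u ≠ 0` and `μ₁ B(u,u) = ‖u‖²` then `u` is an eigenfunction for
`μ₁`, i.e. `⟪u, v⟫ = μ₁ B(u, v)` for all `v`. -/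
theorem stmt15 {H : Type*} [NormedAddCommGroup H] [InnerProductSpace ℝ H]
    [CompleteSpace H] [Nontrivial H] (B : H →L[ℝ] H →L[ℝ] ℝ)
    (hsymm : ∀ u v : H, B u v = B v u)
    (hpos : ∀ u : H, u ≠ 0 → 0 < B u u)
    (hweak : ∀ (u : ℕ → H) (x : H),
      (∀ w : H, Tendsto (fun n => ⟪u n, w⟫) atTop (nhds ⟪x, w⟫)) →
      Tendsto (fun n => B (u n) (u n)) atTop (nhds (B x x)))
    (μ₁ : ℝ) (hμ₁ : μ₁ = sInf ((fun u : H => ‖u‖ ^ 2) '' {u : H | B u u = 1})) :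
    (∀ u : H, μ₁ * B u u ≤ ‖u‖ ^ 2) ∧
    (∀ u : H, u ≠ 0 → μ₁ * B u u = ‖u‖ ^ 2 →
      ∀ v : H, ⟪u, v⟫ = μ₁ * B u v) :=
  stmt15_general B hsymm μ₁ hμ₁
end
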